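/- arXiv:1105.3355 — 3 statements merged into one kernel-verified Lean document; each statement's English description precedes it below -/
import Mathlib

section
/- Let ℬ be a nonempty collection of measurable subsets of 2^ω closed under the operation B ↦ D ∪ t⌢B whenever D is clopen and N_t ∩ D = ∅ (where t⌢B = {t⌢x : x ∈ B}). Then for every measurable A ⊆ 2^ω and every ε > 0 there exists B ∈ ℬ with μ(A △ B) < ε. -/
open MeasureTheory Filter Topology Set
open scoped ENNReal symmDiff

noncomputable section

/-- The Cantor space `2^ω`. -/
abbrev Cantor : Type := ℕ → Bool

/-- The first `n` digits of `x` as a finite binary string. -/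
def seg (x : Cantor) (n : ℕ) : List Bool := List.ofFn (fun i : Fin n => x i)

/-- The basic clopen set `N_s` of all extensions of the finite string `s`. -/
def cyl (s : List Bool) : Set Cantor := {x | seg x s.length = s}

/-- Concatenation `s⌢x` of a finite string with an infinite sequence. -/
def cat (s : List Bool) (x : Cantor) : Cantor :=
  fun n => if h : n < s.length then s.get ⟨n, h⟩ else x (n - s.length)

/-- The localization `A_s = {x : s⌢x ∈ A}` of `A` at `s`. -/
def loc (s : List Bool) (A : Set Cantor) : Set Cantor := {x | cat s x ∈ A}

/-- `Φ(A)`: the set of points of density `1` in `A`. -/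
def dens1 (μ : Measure Cantor) (A : Set Cantor) : Set Cantor :=
  {x | Tendsto (fun n => μ (A ∩ cyl (seg x n)) / μ (cyl (seg x n))) atTop (𝓝 1)}

/-- `μ` is the coin-tossing (Lebesgue) measure on Cantor space:
it gives each basic clopen set `N_s` measure `2^{-|s|}`. -/
def IsCoin (μ : Measure Cantor) : Prop :=
  ∀ s : List Bool, μ (cyl s) = (2 : ℝ≥0∞)⁻¹ ^ s.length

lemma cyl_eq (s : List Bool) :
    cyl s = ⋂ i : Fin s.length, (fun x : Cantor => x i) ⁻¹' {s.get i} := by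
  ext x
  simp only [cyl, seg, mem_setOf_eq, mem_iInter, mem_preimage, mem_singleton_iff]
  constructor
  · intro h i
    have hx : x i = (List.ofFn fun j : Fin s.length => x j)[(i : ℕ)]'(by simp) := by
      simp
    rw [hx]
    simp only [h]
    simp
  · intro h
    conv_rhs => rw [← List.ofFn_get s]
    exact congrArg List.ofFn (funext fun i => h i)

lemma isClopen_cyl (s : List Bool) : IsClopen (cyl s) := by
  rw [cyl_eq]
  exact isClopen_iInter_of_finite fun i =>
    (isClopen_discrete _).preimage (continuous_apply _)

lemma cyl_nil : cyl ([] : List Bool) = univ := by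
  ext x; simp [cyl, seg]

lemma cat_mem_cyl (t : List Bool) (x : Cantor) : cat t x ∈ cyl t := by
  show seg (cat t x) t.length = t
  unfold seg cat
  conv_rhs => rw [← List.ofFn_get t]
  exact congrArg List.ofFn (funext fun i => by simp [i.isLt])

/-- A nonempty family of measurable sets closed under `B ↦ D ∪ t⌢B` (for clopen `D`
disjoint from `N_t`) is dense in the measure algebra. -/
theorem stmt2 (μ : Measure Cantor) (hμ : IsCoin μ) (ℬ : Set (Set Cantor))
    (hmeas : ∀ B ∈ ℬ, MeasurableSet B) (hne : ℬ.Nonempty)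
    (hclosed : ∀ B ∈ ℬ, ∀ D : Set Cantor, IsClopen D → ∀ t : List Bool,
      Disjoint (cyl t) D → D ∪ (cat t '' B) ∈ ℬ) :
    ∀ A : Set Cantor, MeasurableSet A → ∀ ε : ℝ≥0∞, 0 < ε →
      ∃ B ∈ ℬ, μ (A ∆ B) < ε := by
  have huniv : μ univ = 1 := by
    rw [← cyl_nil, hμ]; simp
  haveI : IsFiniteMeasure μ := ⟨by rw [huniv]; exact ENNReal.one_lt_top⟩
  -- the algebra of clopen sets is measure-dense
  have h𝒜 : IsSetAlgebra {C : Set Cantor | IsClopen C} :=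
    ⟨isClopen_empty, fun _ h => h.compl, fun _ _ h1 h2 => h1.union h2⟩
  have hgen : (inferInstance : MeasurableSpace Cantor)
      = MeasurableSpace.generateFrom {C : Set Cantor | IsClopen C} := by
    refine le_antisymm ?_ ?_
    · exact iSup_le fun i => MeasurableSpace.comap_le_iff_le_map.mpr
        (MeasurableSpace.le_def.mpr fun t _ =>
          MeasurableSpace.measurableSet_generateFrom
            ((isClopen_discrete t).preimage (continuous_apply i)))
    · exact MeasurableSpace.generateFrom_le fun C hC => hC.isOpen.measurableSet
  have hdense := Measure.MeasureDense.of_generateFrom_isSetAlgebra_finite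
    (μ := μ) h𝒜 hgen
  intro A hA ε hε
  obtain ⟨B₀, hB₀⟩ := hne
  set ε' : ℝ≥0∞ := min ε 2 with hε'
  have hε'0 : 0 < ε' := lt_min hε (by norm_num)
  have hε'top : ε' ≠ ∞ := (min_le_right _ _).trans_lt (by norm_num) |>.ne
  have hhalf0 : ε' / 2 ≠ 0 := by
    simp only [ne_eq, ENNReal.div_eq_zero_iff]
    push_neg
    exact ⟨hε'0.ne', by norm_num⟩
  have hhalftop : ε' / 2 ≠ ∞ := by
    exact (ENNReal.div_lt_top hε'top (by norm_num)).ne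
  -- clopen approximation
  obtain ⟨C, hC, hCapp⟩ := hdense.approx A hA (measure_ne_top μ A)
    (ε' / 2).toReal (ENNReal.toReal_pos hhalf0 hhalftop)
  rw [ENNReal.ofReal_toReal hhalftop] at hCapp
  -- choose a long string
  obtain ⟨n, hn⟩ := ENNReal.exists_inv_two_pow_lt hhalf0
  set t : List Bool := List.replicate n false with ht
  have hμt : μ (cyl t) < ε' / 2 := by
    rw [hμ t, ht, List.length_replicate]; exact hn
  set D : Set Cantor := C \ cyl t with hD
  have hDclopen : IsClopen D := hC.inter (isClopen_cyl t).compl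
  have hdisj : Disjoint (cyl t) D := disjoint_sdiff_self_right
  refine ⟨D ∪ cat t '' B₀, hclosed B₀ hB₀ D hDclopen t hdisj, ?_⟩
  have hsub : A ∆ (D ∪ cat t '' B₀) ⊆ (A ∆ C) ∪ cyl t := by
    rintro x (⟨hxA, hxB⟩ | ⟨hxB, hxA⟩)
    · by_cases hxt : x ∈ cyl t
      · exact Or.inr hxt
      · refine Or.inl (Or.inl ⟨hxA, fun hxC => hxB (Or.inl ⟨hxC, hxt⟩)⟩)
    · rcases hxB with hxD | hxI
      · exact Or.inl (Or.inr ⟨hxD.1, hxA⟩)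
      · obtain ⟨y, -, rfl⟩ := hxI
        exact Or.inr (cat_mem_cyl t y)
  calc μ (A ∆ (D ∪ cat t '' B₀)) ≤ μ ((A ∆ C) ∪ cyl t) := measure_mono hsub
    _ ≤ μ (A ∆ C) + μ (cyl t) := measure_union_le _ _
    _ < ε' / 2 + ε' / 2 := ENNReal.add_lt_add hCapp hμt
    _ = ε' := ENNReal.add_halves ε'
    _ ≤ ε := min_le_left _ _
end
end

section
/- For every measurable A ⊆ 2^ω, the closure of Φ(A) equals supt⁺(A) (the smallest closed set containing A up to a null set) and the interior of Φ(A) equals supt⁻(A) (the largest open set V with μ(V) = μ(V ∩ A)). -/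
open MeasureTheory Filter Topology Set
open scoped ENNReal symmDiff

noncomputable section

/-- The inner support: the largest open set on which A has full measure. -/
def suptMinus (μ : Measure Cantor) (A : Set Cantor) : Set Cantor :=
  ⋃₀ {U | IsOpen U ∧ μ U = μ (U ∩ A)}

/-- The outer support: the smallest closed set containing A up to a null set. -/
def suptPlus (μ : Measure Cantor) (A : Set Cantor) : Set Cantor :=
  ⋂₀ {C | IsClosed C ∧ μ (A \ C) = 0}

/-!
Both identities follow from the Lebesgue density theorem `μ (A ∆ Φ(A)) = 0` together with
locality of `Φ`: a point having a cylinder neighbourhood on which `A` is null is not in `Φ(A)`,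
and a point having one on which `A` is conull is in `Φ(A)`. The density theorem is a Vitali
covering argument: the minimal cylinders on which `A` has relative measure at most `c < 1` are
pairwise disjoint, so the points of `A` lying in such cylinders arbitrarily deep have measure at
most `c` times that of any open set containing them, hence measure `0` by outer regularity.
-/

@[simp] lemma length_seg (x : Cantor) (n : ℕ) : (seg x n).length = n := List.length_ofFn

@[simp] lemma getElem_seg (x : Cantor) (n i : ℕ) (h : i < (seg x n).length) :
    (seg x n)[i] = x i := by simp [seg]

lemma seg_eq_of_mem_cyl {y : Cantor} {s : List Bool} (hy : y ∈ cyl s) : seg y s.length = s := hy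

lemma take_seg (x : Cantor) {m n : ℕ} (hmn : m ≤ n) : (seg x n).take m = seg x m :=
  List.ext_getElem (by simp [hmn]) fun i _ _ => by simp

lemma mem_cyl {y : Cantor} {s : List Bool} :
    y ∈ cyl s ↔ ∀ i (h : i < s.length), y i = s[i] := by
  refine ⟨fun hy i hi => ?_, fun h => List.ext_getElem (by simp) fun i _ hi => by simp [h i hi]⟩
  have := List.getElem_of_eq (seg_eq_of_mem_cyl hy) (by simpa using hi)
  rwa [getElem_seg] at this

lemma mem_cyl_seg {x y : Cantor} {n : ℕ} : y ∈ cyl (seg x n) ↔ ∀ i < n, y i = x i := by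
  simp [mem_cyl]

lemma mem_cyl_seg_self (x : Cantor) (n : ℕ) : x ∈ cyl (seg x n) := mem_cyl_seg.2 fun _ _ => rfl

lemma cyl_seg_antitone (x : Cantor) : Antitone fun n => cyl (seg x n) :=
  fun _ _ hmn _ hy => mem_cyl_seg.2 fun i hi => mem_cyl_seg.1 hy i (hi.trans_le hmn)

lemma measurableSet_cyl (s : List Bool) : MeasurableSet (cyl s) := by
  have : cyl s = ⋂ i : Fin s.length, {y : Cantor | y i = s[i]} := by
    ext y
    simp only [mem_cyl, mem_iInter, mem_ofPred_eq]
    exact ⟨fun h i => h i i.2, fun h i hi => h ⟨i, hi⟩⟩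
  rw [this]
  exact .iInter fun i => measurable_pi_apply (i : ℕ) (measurableSet_singleton _)

lemma eventually_cyl_seg_subset {U : Set Cantor} (hU : IsOpen U) {x : Cantor} (hx : x ∈ U) :
    ∀ᶠ n in atTop, cyl (seg x n) ⊆ U := by
  obtain ⟨I, u, hu, hIU⟩ := isOpen_pi_iff.1 hU x hx
  refine eventually_atTop.2 ⟨I.sup id + 1, fun n hn y hy => hIU fun i hi => ?_⟩
  rw [mem_cyl_seg.1 hy i ((Nat.lt_succ_of_le (Finset.le_sup (f := id) hi)).trans_le hn)]
  exact (hu i hi).2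

/-- Take the members of `𝒞` with no proper prefix in `𝒞`: two of them whose cylinders meet are
nested, hence equal. -/
lemma exists_pairwiseDisjoint_cyl_cover (𝒞 : Set (List Bool)) {B : Set Cantor}
    (h𝒞 : ∀ x ∈ B, ∃ n, seg x n ∈ 𝒞) :
    ∃ S ⊆ 𝒞, S.PairwiseDisjoint cyl ∧ B ⊆ ⋃ s ∈ S, cyl s := by
  classical
  refine ⟨{s ∈ 𝒞 | ∀ m < s.length, s.take m ∉ 𝒞}, fun s hs => hs.1, ?_, fun x hx => ?_⟩
  · have nested : ∀ s t : List Bool, (∀ m < t.length, t.take m ∉ 𝒞) → s ∈ 𝒞 →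
        s.length ≤ t.length → ∀ z ∈ cyl s, z ∈ cyl t → s = t := by
      intro s t ht hs hst z hzs hzt
      have hs' := seg_eq_of_mem_cyl hzs
      have ht' := seg_eq_of_mem_cyl hzt
      rcases hst.lt_or_eq with hlt | heq
      · have htake : t.take s.length = s := by rw [← ht', take_seg z hlt.le, hs']
        exact (ht _ hlt (by rwa [htake])).elim
      · rw [← hs', ← ht', heq]
    intro s hs t ht hst
    refine disjoint_left.2 fun z hzs hzt => hst ?_
    rcases le_total s.length t.length with h | h
    · exact nested s t ht.2 hs.1 h z hzs hzt
    · exact (nested t s hs.2 ht.1 h z hzt hzs).symm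
  · refine mem_biUnion ⟨Nat.find_spec (h𝒞 x hx), fun m hm hmem => ?_⟩ (mem_cyl_seg_self x _)
    rw [length_seg] at hm
    exact Nat.find_min (h𝒞 x hx) hm (take_seg x hm.le ▸ hmem)

variable {μ : Measure Cantor}

lemma measure_inter_le_mul_of_frequently_le {A B U : Set Cantor} {c : ℝ≥0∞} (hU : IsOpen U)
    (hBU : B ⊆ U) (hB : ∀ x ∈ B, ∃ᶠ n in atTop, μ (A ∩ cyl (seg x n)) ≤ c * μ (cyl (seg x n))) :
    μ (A ∩ B) ≤ c * μ U := by
  set 𝒞 := {s | cyl s ⊆ U ∧ μ (A ∩ cyl s) ≤ c * μ (cyl s)}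
  have h𝒞 : ∀ x ∈ B, ∃ n, seg x n ∈ 𝒞 := fun x hx =>
    ((hB x hx).and_eventually (eventually_cyl_seg_subset hU (hBU hx))).exists.imp
      fun _ hn => ⟨hn.2, hn.1⟩
  obtain ⟨S, hS𝒞, hdisj, hcover⟩ := exists_pairwiseDisjoint_cyl_cover 𝒞 h𝒞
  calc μ (A ∩ B) ≤ μ (⋃ s ∈ S, A ∩ cyl s) := by
        rw [← inter_iUnion₂]; exact measure_mono (inter_subset_inter_right A hcover)
    _ ≤ ∑' s : S, μ (A ∩ cyl s) := measure_biUnion_le μ S.to_countable _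
    _ ≤ ∑' s : S, c * μ (cyl s) := ENNReal.tsum_le_tsum fun s => (hS𝒞 s.2).2
    _ = c * μ (⋃ s ∈ S, cyl s) := by
        rw [ENNReal.tsum_mul_left,
          measure_biUnion S.to_countable hdisj fun s _ => measurableSet_cyl s]
    _ ≤ c * μ U := by gcongr; exact iUnion₂_subset fun s hs => (hS𝒞 hs).1

lemma measure_frequently_le_mul_eq_zero [IsFiniteMeasure μ] (A : Set Cantor) {c : ℝ≥0∞}
    (hc : c < 1) :
    μ (A ∩ {x | ∃ᶠ n in atTop, μ (A ∩ cyl (seg x n)) ≤ c * μ (cyl (seg x n))}) = 0 := by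
  set B := A ∩ {x | ∃ᶠ n in atTop, μ (A ∩ cyl (seg x n)) ≤ c * μ (cyl (seg x n))}
  have hB : ∀ U, IsOpen U → B ⊆ U → μ B ≤ c * μ U := fun U hU hBU => by
    simpa [B, ← inter_assoc] using measure_inter_le_mul_of_frequently_le hU hBU fun x hx => hx.2
  have hle : μ B ≤ c * μ B := by
    refine ENNReal.le_of_forall_pos_le_add fun ε hε _ => ?_
    obtain ⟨U, hBU, hU, hμU⟩ :=
      B.exists_isOpen_lt_add (measure_ne_top μ B) (ENNReal.coe_ne_zero.2 hε.ne')
    calc μ B ≤ c * μ U := hB U hU hBU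
      _ ≤ c * μ B + c * ε := by rw [← mul_add]; gcongr
      _ ≤ c * μ B + ε := by gcongr; exact mul_le_of_le_one_left' hc.le
  by_contra h0
  exact hle.not_gt (ENNReal.mul_lt_of_lt_div (by rwa [ENNReal.div_self h0 (measure_ne_top μ B)]))

lemma frequently_le_mul_of_notMem_dens1 [IsFiniteMeasure μ] {A : Set Cantor} {x : Cantor}
    (hx : x ∉ dens1 μ A) :
    ∃ k : ℕ, ∃ᶠ n in atTop, μ (A ∩ cyl (seg x n)) ≤ (1 - (k : ℝ≥0∞)⁻¹) * μ (cyl (seg x n)) := by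
  have hle_one : ∀ n, μ (A ∩ cyl (seg x n)) / μ (cyl (seg x n)) ≤ 1 := fun n =>
    ENNReal.div_le_of_le_mul (by rw [one_mul]; exact measure_mono inter_subset_right)
  simp only [dens1, mem_ofPred_eq, ENNReal.tendsto_nhds ENNReal.one_ne_top, not_forall,
    not_eventually] at hx
  obtain ⟨ε, hε, hfreq⟩ := hx
  obtain ⟨k, hk⟩ := ENNReal.exists_inv_nat_lt hε.ne'
  refine ⟨k, hfreq.mono fun n hn => ?_⟩
  have hlt : μ (A ∩ cyl (seg x n)) / μ (cyl (seg x n)) < 1 - ε :=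
    lt_of_not_ge fun h => hn ⟨h, (hle_one n).trans le_self_add⟩
  rw [← ENNReal.div_le_iff_le_mul (.inr (by simp)) (.inl (measure_ne_top μ _))]
  exact hlt.le.trans (tsub_le_tsub_left hk.le 1)

lemma measure_diff_dens1_eq_zero [IsFiniteMeasure μ] (A : Set Cantor) :
    μ (A \ dens1 μ A) = 0 := by
  refine measure_mono_null (t := ⋃ k : ℕ, A ∩ {x | ∃ᶠ n in atTop,
      μ (A ∩ cyl (seg x n)) ≤ (1 - (k : ℝ≥0∞)⁻¹) * μ (cyl (seg x n))})
    (fun x hx => mem_iUnion.2 <| (frequently_le_mul_of_notMem_dens1 hx.2).imp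
      fun _ hk => ⟨hx.1, hk⟩)
    (measure_iUnion_null fun k => measure_frequently_le_mul_eq_zero A ?_)
  exact ENNReal.sub_lt_self ENNReal.one_ne_top one_ne_zero
    (ENNReal.inv_ne_zero.2 (ENNReal.natCast_ne_top k))

lemma disjoint_dens1_compl [IsFiniteMeasure μ] (hpos : ∀ s, μ (cyl s) ≠ 0) {A : Set Cantor}
    (hA : MeasurableSet A) : Disjoint (dens1 μ A) (dens1 μ Aᶜ) := by
  refine disjoint_left.2 fun x (hx : Tendsto _ _ _) (hxc : Tendsto _ _ _) => ?_
  have hsum : ∀ n, μ (A ∩ cyl (seg x n)) / μ (cyl (seg x n))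
      + μ (Aᶜ ∩ cyl (seg x n)) / μ (cyl (seg x n)) = 1 := fun n => by
    rw [ENNReal.div_add_div_same, inter_comm, inter_comm Aᶜ, ← sdiff_eq,
      measure_inter_add_sdiff _ hA, ENNReal.div_self (hpos _) (measure_ne_top μ _)]
  have := tendsto_nhds_unique ((hx.add hxc).congr hsum) tendsto_const_nhds
  norm_num at this

lemma measure_dens1_diff_eq_zero [IsFiniteMeasure μ] (hpos : ∀ s, μ (cyl s) ≠ 0)
    {A : Set Cantor} (hA : MeasurableSet A) : μ (dens1 μ A \ A) = 0 :=
  measure_mono_null (t := Aᶜ \ dens1 μ Aᶜ)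
    (fun _ hx => ⟨hx.2, (disjoint_dens1_compl hpos hA).notMem_of_mem_left hx.1⟩)
    (measure_diff_dens1_eq_zero Aᶜ)

lemma dens1_subset_of_measure_diff_eq_zero {A C : Set Cantor} (hC : IsClosed C)
    (hAC : μ (A \ C) = 0) : dens1 μ A ⊆ C := by
  intro x (hx : Tendsto _ _ _)
  by_contra hxC
  have hzero : ∀ᶠ n in atTop, 0 = μ (A ∩ cyl (seg x n)) / μ (cyl (seg x n)) :=
    (eventually_cyl_seg_subset hC.isOpen_compl hxC).mono fun n hn => by
      have : μ (A ∩ cyl (seg x n)) = 0 := measure_mono_null (t := A \ C)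
        (fun _ hy => ⟨hy.1, hn hy.2⟩) hAC
      rw [this, ENNReal.zero_div]
  exact one_ne_zero (tendsto_nhds_unique hx (tendsto_const_nhds.congr' hzero))

lemma subset_dens1_of_measure_diff_eq_zero [IsFiniteMeasure μ] (hpos : ∀ s, μ (cyl s) ≠ 0)
    {A U : Set Cantor} (hU : IsOpen U) (hUA : μ (U \ A) = 0) : U ⊆ dens1 μ A := fun x hx =>
  tendsto_const_nhds.congr' <| (eventually_cyl_seg_subset hU hx).mono fun n hn => by
    dsimp only
    rw [inter_comm, measure_inter_conull' (measure_mono_null (sdiff_subset_sdiff_left hn) hUA),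
      ENNReal.div_self (hpos _) (measure_ne_top μ _)]

lemma IsCoin.isFiniteMeasure (hμ : IsCoin μ) : IsFiniteMeasure μ := by
  have : cyl [] = univ := eq_univ_of_forall fun _ => mem_cyl.2 fun _ h => absurd h (by simp)
  exact ⟨by rw [← this, hμ]; simp⟩

lemma IsCoin.measure_cyl_ne_zero (hμ : IsCoin μ) (s : List Bool) : μ (cyl s) ≠ 0 := by
  simp [hμ s]

/-- Cl Φ(A) = supt⁺(A) and Int Φ(A) = supt⁻(A). -/
theorem stmt14 (μ : Measure Cantor) (hμ : IsCoin μ) (A : Set Cantor) (hA : MeasurableSet A) :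
    closure (dens1 μ A) = suptPlus μ A ∧ interior (dens1 μ A) = suptMinus μ A := by
  have := hμ.isFiniteMeasure
  have hpos := hμ.measure_cyl_ne_zero
  refine ⟨subset_antisymm ?_ ?_, subset_antisymm ?_ ?_⟩
  · exact subset_sInter fun C ⟨hC, hAC⟩ =>
      closure_minimal (dens1_subset_of_measure_diff_eq_zero hC hAC) hC
  · exact sInter_subset_of_mem ⟨isClosed_closure,
      measure_mono_null (sdiff_subset_sdiff_right subset_closure) (measure_diff_dens1_eq_zero A)⟩
  · refine subset_sUnion_of_mem ⟨isOpen_interior, (measure_inter_conull' ?_).symm⟩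
    exact measure_mono_null (sdiff_subset_sdiff_left interior_subset)
      (measure_dens1_diff_eq_zero hpos hA)
  · refine sUnion_subset fun U ⟨hU, hUA⟩ =>
      interior_maximal (subset_dens1_of_measure_diff_eq_zero hpos hU ?_) hU
    refine (ENNReal.add_right_inj (measure_ne_top μ (U ∩ A))).1 ?_
    rw [add_zero, measure_inter_add_sdiff U hA, hUA]
end
end

section
/- There exists an open set U ⊆ 2^ω which is 𝒯-regular (Φ(U) = U) and whose frontier (boundary) has positive measure; e.g., the complement of the branches of the tree built from a sparse sequence of order ℓ_n = 2n satisfies μ(U) = 2/3, μ(U_t) ≤ 2/3 for every t in the complementary tree, and μ(Fr U) = 1/3 > 0. -/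
open MeasureTheory Filter Topology Set
open scoped ENNReal symmDiff

noncomputable section

/-! The set `U` of sequences that are constantly `true` on at least one block, the `k`-th
block having length `k + 2`, is open and dense, so its frontier is its complement, and
`μ U ≤ ∑ 2^-(k+2) = 1/2`. Every open set consists of density points. Conversely a point
`x ∉ U` has a `false` digit in every block, so in the cylinder around `x` reaching up to block
`n` only the blocks from `n` on can be all `true`; they fill at most a fraction `2^-(n+1)` of
it, and `x` is not a density point. -/

open PiNat

lemma cyl_seg (y : Cantor) (n : ℕ) : cyl (seg y n) = cylinder y n := by
  ext x
  simp only [cyl, seg, List.length_ofFn, List.ofFn_inj, mem_cylinder_iff]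
  exact ⟨fun h i hi => congrFun h ⟨i, hi⟩, fun h => funext fun i => h i i.isLt⟩

lemma mem_dens1_iff {μ : Measure Cantor} {A : Set Cantor} {x : Cantor} :
    x ∈ dens1 μ A ↔
      Tendsto (fun n => μ (A ∩ cylinder x n) / μ (cylinder x n)) atTop (𝓝 1) := by
  simp only [dens1, cyl_seg, Set.mem_ofPred_eq]

lemma IsCoin.measure_cylinder {μ : Measure Cantor} (hμ : IsCoin μ) (y : Cantor) (n : ℕ) :
    μ (cylinder y n) = 2⁻¹ ^ n := by
  rw [← cyl_seg, hμ, seg, List.length_ofFn]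

lemma exists_cylinder_subset_of_isOpen {E : ℕ → Type*} [∀ n, TopologicalSpace (E n)]
    [∀ n, DiscreteTopology (E n)] {U : Set (∀ n, E n)} (hU : IsOpen U) {x : ∀ n, E n}
    (hx : x ∈ U) : ∃ n, cylinder x n ⊆ U := by
  obtain ⟨_, ⟨y, n, rfl⟩, hxy, hyU⟩ :=
    (isTopologicalBasis_cylinders E).exists_subset_of_mem_open hx hU
  exact ⟨n, (mem_cylinder_iff_eq.1 hxy).trans_subset hyU⟩

lemma IsOpen.subset_dens1 {μ : Measure Cantor} (hμ : IsCoin μ) {U : Set Cantor}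
    (hU : IsOpen U) : U ⊆ dens1 μ U := by
  intro x hx
  obtain ⟨N, hN⟩ := exists_cylinder_subset_of_isOpen hU hx
  refine mem_dens1_iff.2 (tendsto_const_nhds.congr' (eventually_atTop.2 ⟨N, fun n hn => ?_⟩))
  dsimp only
  rw [inter_eq_right.2 ((cylinder_anti x hn).trans hN), hμ.measure_cylinder,
    ENNReal.div_self (pow_ne_zero _ (by norm_num)) (ENNReal.pow_ne_top (by norm_num))]

lemma notMem_dens1_of_frequently_le {μ : Measure Cantor} {A : Set Cantor} {x : Cantor}
    {c : ℝ≥0∞} (hc : c < 1)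
    (h : ∃ᶠ n in atTop, μ (A ∩ cylinder x n) / μ (cylinder x n) ≤ c) :
    x ∉ dens1 μ A := by
  intro hx
  have hlarge := (mem_dens1_iff.1 hx).eventually (lt_mem_nhds hc)
  obtain ⟨n, hle, hlt⟩ := (h.and_eventually hlarge).exists
  exact hle.not_gt hlt

def allTrueOn (p q : ℕ) : Set Cantor := {x | ∀ i, p ≤ i → i < q → x i = true}

lemma isOpen_allTrueOn (p q : ℕ) : IsOpen (allTrueOn p q) :=
  isOpen_iff_forall_mem_open.2 fun x hx =>
    ⟨cylinder x q, fun _ hy i hpi hiq => (hy i hiq).trans (hx i hpi hiq),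
      isOpen_cylinder _ x q, self_mem_cylinder x q⟩

/-- Each point of `allTrueOn p q ∩ cylinder y L` is pinned down on `[0, q)` by its digits on
`[L, p)`, so the set is covered by `2 ^ (p - L)` cylinders of length `q`. -/
lemma IsCoin.measure_allTrueOn_inter_cylinder_le {μ : Measure Cantor} (hμ : IsCoin μ)
    (y : Cantor) {L p q : ℕ} (hLp : L ≤ p) (hpq : p ≤ q) :
    μ (allTrueOn p q ∩ cylinder y L) ≤ 2⁻¹ ^ L * 2⁻¹ ^ (q - p) := by
  let extend (f : Fin (p - L) → Bool) : Cantor := fun i =>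
    if i < L then y i else if h : i - L < p - L then f ⟨i - L, h⟩ else true
  have hcover : allTrueOn p q ∩ cylinder y L ⊆ ⋃ f, cylinder (extend f) q := by
    rintro x ⟨hxp, hxL⟩
    refine mem_iUnion.2 ⟨fun j => x (L + j), fun i hiq => ?_⟩
    by_cases hiL : i < L
    · simp only [extend, if_pos hiL]
      exact hxL i hiL
    by_cases hip : i - L < p - L
    · simp only [extend, if_neg hiL, dif_pos hip]
      congr 1
      omega
    · simp only [extend, if_neg hiL, dif_neg hip]
      exact hxp i (by omega) hiq
  calc μ (allTrueOn p q ∩ cylinder y L)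
      ≤ ∑' f, μ (cylinder (extend f) q) := (measure_mono hcover).trans (measure_iUnion_le _)
    _ = 2 ^ (p - L) * 2⁻¹ ^ q := by
      simp only [hμ.measure_cylinder, tsum_fintype, Finset.sum_const, Finset.card_univ,
        Fintype.card_fun, Fintype.card_bool, Fintype.card_fin, nsmul_eq_mul, Nat.cast_pow]
      norm_num
    _ = 2⁻¹ ^ L * 2⁻¹ ^ (q - p) := by
      conv_lhs => rw [show q = (p - L) + (L + (q - p)) by omega, pow_add, ← mul_assoc,
        ← mul_pow, ENNReal.mul_inv_cancel (by norm_num) (by norm_num), one_pow, one_mul, pow_add]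

def blockStart : ℕ → ℕ
  | 0 => 0
  | k + 1 => blockStart k + (k + 2)

lemma le_blockStart (k : ℕ) : k ≤ blockStart k := by
  induction k with
  | zero => exact le_rfl
  | succ k ih => simp only [blockStart]; omega

lemma blockStart_mono : Monotone blockStart :=
  monotone_nat_of_le_succ fun k => by simp only [blockStart]; omega

def block (k : ℕ) : Set Cantor := allTrueOn (blockStart k) (blockStart (k + 1))

def blockUnion : Set Cantor := ⋃ k, block k

lemma isOpen_blockUnion : IsOpen blockUnion :=
  isOpen_iUnion fun _ => isOpen_allTrueOn _ _

lemma dense_blockUnion : Dense blockUnion := by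
  refine dense_iff_inter_open.2 fun V hV ⟨x, hxV⟩ => ?_
  obtain ⟨n, hn⟩ := exists_cylinder_subset_of_isOpen hV hxV
  let z : Cantor := fun i => if i < blockStart n then x i else true
  have hz : z ∈ cylinder x n := fun i hi => if_pos (hi.trans_le (le_blockStart n))
  exact ⟨z, hn hz, mem_iUnion.2 ⟨n, fun i hi _ => if_neg hi.not_gt⟩⟩

lemma frontier_blockUnion : frontier blockUnion = blockUnionᶜ := by
  rw [isOpen_blockUnion.frontier_eq, dense_blockUnion.closure_eq, compl_eq_univ_sdiff]

lemma tsum_inv_two_pow_add_add_two (n : ℕ) :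
    ∑' k, (2⁻¹ : ℝ≥0∞) ^ (n + k + 2) = 2⁻¹ ^ (n + 1) := by
  simp only [show ∀ k, n + k + 2 = (n + 1) + (k + 1) by omega, pow_add _ (n + 1),
    ENNReal.tsum_mul_left, ENNReal.tsum_geometric_add_one, ENNReal.one_sub_inv_two, inv_inv,
    ENNReal.inv_mul_cancel two_ne_zero ENNReal.ofNat_ne_top, mul_one]

lemma IsCoin.measure_iUnion_block_inter_cylinder_le {μ : Measure Cantor} (hμ : IsCoin μ)
    (y : Cantor) (n : ℕ) :
    μ ((⋃ k, block (n + k)) ∩ cylinder y (blockStart n)) ≤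
      2⁻¹ ^ blockStart n * 2⁻¹ ^ (n + 1) := by
  calc μ ((⋃ k, block (n + k)) ∩ cylinder y (blockStart n))
      ≤ ∑' k, μ (block (n + k) ∩ cylinder y (blockStart n)) := by
        rw [iUnion_inter]
        exact measure_iUnion_le _
    _ ≤ ∑' k, 2⁻¹ ^ blockStart n * 2⁻¹ ^ (n + k + 2) := by
        refine ENNReal.tsum_le_tsum fun k => ?_
        have hlen : blockStart (n + k + 1) - blockStart (n + k) = n + k + 2 := by
          simp only [blockStart]; omega
        rw [← hlen]
        exact hμ.measure_allTrueOn_inter_cylinder_le y (blockStart_mono (Nat.le_add_right n k))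
          (blockStart_mono (Nat.le_succ _))
    _ = 2⁻¹ ^ blockStart n * 2⁻¹ ^ (n + 1) := by
        rw [ENNReal.tsum_mul_left, tsum_inv_two_pow_add_add_two]

lemma IsCoin.measure_blockUnion_le {μ : Measure Cantor} (hμ : IsCoin μ) :
    μ blockUnion ≤ 2⁻¹ := by
  simpa [blockUnion, blockStart] using hμ.measure_iUnion_block_inter_cylinder_le (fun _ => true) 0

lemma blockUnion_inter_cylinder_subset {x : Cantor} (hx : x ∉ blockUnion) (n : ℕ) :
    blockUnion ∩ cylinder x (blockStart n) ⊆
      (⋃ k, block (n + k)) ∩ cylinder x (blockStart n) := by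
  rintro z ⟨hz, hzx⟩
  obtain ⟨k, hzk⟩ := mem_iUnion.1 hz
  have hnk : n ≤ k := by
    by_contra! hkn
    refine hx (mem_iUnion.2 ⟨k, fun i hki hik => ?_⟩)
    rw [← hzx i (hik.trans_le (blockStart_mono hkn))]
    exact hzk i hki hik
  exact ⟨mem_iUnion.2 ⟨k - n, by rwa [Nat.add_sub_cancel' hnk]⟩, hzx⟩

lemma IsCoin.dens1_blockUnion {μ : Measure Cantor} (hμ : IsCoin μ) :
    dens1 μ blockUnion = blockUnion := by
  refine Subset.antisymm (fun x hx => ?_) (isOpen_blockUnion.subset_dens1 hμ)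
  by_contra hxU
  refine notMem_dens1_of_frequently_le ENNReal.one_half_lt_one ?_ hx
  refine (tendsto_atTop_mono le_blockStart tendsto_id).frequently
    (Frequently.of_forall fun n => ?_)
  rw [hμ.measure_cylinder]
  refine ENNReal.div_le_of_le_mul ?_
  calc μ (blockUnion ∩ cylinder x (blockStart n))
      ≤ μ ((⋃ k, block (n + k)) ∩ cylinder x (blockStart n)) :=
        measure_mono (blockUnion_inter_cylinder_subset hxU n)
    _ ≤ 2⁻¹ ^ blockStart n * 2⁻¹ ^ (n + 1) := hμ.measure_iUnion_block_inter_cylinder_le x n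
    _ ≤ 2⁻¹ * 2⁻¹ ^ blockStart n := by
        rw [mul_comm]
        gcongr
        exact pow_le_of_le_one (by positivity) ENNReal.one_half_lt_one.le n.succ_ne_zero

lemma IsCoin.measure_frontier_blockUnion_pos {μ : Measure Cantor} (hμ : IsCoin μ) :
    0 < μ (frontier blockUnion) := by
  have huniv : μ univ = 1 := by
    simpa [cylinder_zero] using hμ.measure_cylinder (fun _ => true) 0
  rw [frontier_blockUnion, pos_iff_ne_zero]
  intro h
  have : (1 : ℝ≥0∞) ≤ 2⁻¹ := calc
    1 = μ (blockUnion ∪ blockUnionᶜ) := by rw [union_compl_self, huniv]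
    _ ≤ μ blockUnion + μ blockUnionᶜ := measure_union_le _ _
    _ ≤ 2⁻¹ := by rw [h, add_zero]; exact hμ.measure_blockUnion_le
  exact ENNReal.one_half_lt_one.not_ge this

/-- There is a 𝒯-regular open subset of Cantor space whose frontier has positive measure. -/
theorem stmt19 (μ : Measure Cantor) (hμ : IsCoin μ) :
    ∃ U : Set Cantor, IsOpen U ∧ dens1 μ U = U ∧ 0 < μ (frontier U) :=
  ⟨blockUnion, isOpen_blockUnion, hμ.dens1_blockUnion, hμ.measure_frontier_blockUnion_pos⟩
end
end
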